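/- arXiv:1904.09125 — 3 statements merged into one kernel-verified Lean document; each statement's English description precedes it below -/
import Mathlib

section
/- For every k ≥ 1, a word w over {a,b} satisfies ScatFact_k(w) = Σ^k (the set of all words of length k over {a,b}) if and only if w has a scattered factor of length 2k lying in {ab, ba}^k (a concatenation of k blocks each equal to ab or ba). -/
def wa : Bool := false
def wb : Bool := true

/-- The set of scattered factors (subsequences) of `w` of length exactly `k`. -/
def ScatFact (k : ℕ) (w : List Bool) : Finset (List Bool) :=
  (w.sublists.filter (fun u => u.length = k)).toFinset

/-- `u` is a concatenation of `k` blocks, each equal to `ab` or `ba`. -/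
def AltBlocks (k : ℕ) (u : List Bool) : Prop :=
  ∃ blocks : List (List Bool), blocks.length = k ∧
    (∀ b ∈ blocks, b = [wa, wb] ∨ b = [wb, wa]) ∧ u = blocks.flatten

/-!
A word is `k`-universal when every word of length `k` is a scattered factor of it. A
concatenation of `k` blocks each containing both letters is `k`-universal, one letter per block.
Conversely, if `w = c :: w₀` is `(k + 1)`-universal, split `w₀` at the first occurrence of `!c`:
`w₀ = s ++ !c :: t`. Any `!c :: v` embeds in `w`, and its first letter can only go to that
occurrence, so `t` is `k`-universal; the block `[c, !c]` followed by the blocks found in `t`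
gives the required scattered factor.
-/

open scoped List

namespace List

theorem sublist_of_cons_sublist_append_cons {α : Type*} {x : α} {v s t : List α}
    (h : x :: v <+ s ++ x :: t) (hx : x ∉ s) : v <+ t := by
  induction s with
  | nil => exact cons_sublist_cons.mp h
  | cons y s ih =>
    rw [mem_cons, not_or] at hx
    cases h with
    | cons _ h => exact ih h hx.2
    | cons_cons => exact absurd rfl hx.1

end List

section Universal

variable {α : Type*}

def IsUniversal (k : ℕ) (w : List α) : Prop :=
  ∀ v : List α, v.length = k → v <+ w

theorem IsUniversal.mem {k : ℕ} {w : List α} (h : IsUniversal (k + 1) w) (x : α) : x ∈ w :=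
  (h (List.replicate (k + 1) x) (List.length_replicate ..)).subset (by simp)

theorem IsUniversal.of_append_cons {k : ℕ} {x : α} {s t : List α}
    (h : IsUniversal (k + 1) (s ++ x :: t)) (hx : x ∉ s) : IsUniversal k t := fun v hv =>
  List.sublist_of_cons_sublist_append_cons (h (x :: v) (by simp [hv])) hx

theorem isUniversal_flatten {blocks : List (List α)} (h : ∀ b ∈ blocks, ∀ x, x ∈ b) :
    IsUniversal blocks.length blocks.flatten := by
  induction blocks with
  | nil => simp [IsUniversal]
  | cons b bs ih =>
    rintro (_ | ⟨x, v⟩) hv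
    · simp at hv
    · have hx : [x] <+ b := List.singleton_sublist.mpr (h b List.mem_cons_self x)
      have hv' : v <+ bs.flatten :=
        ih (fun b' hb' => h b' (List.mem_cons_of_mem b hb')) v (by simpa using hv)
      simpa using hx.append hv'

end Universal

theorem mem_scatFact {k : ℕ} {w v : List Bool} : v ∈ ScatFact k w ↔ v <+ w ∧ v.length = k := by
  simp [ScatFact]

theorem altBlocks_zero : AltBlocks 0 [] :=
  ⟨[], rfl, by simp, rfl⟩

theorem AltBlocks.cons {k : ℕ} {u : List Bool} (h : AltBlocks k u) (c : Bool) :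
    AltBlocks (k + 1) (c :: (!c) :: u) := by
  obtain ⟨blocks, hlen, hblocks, rfl⟩ := h
  refine ⟨[c, !c] :: blocks, by simp [hlen], ?_, by simp⟩
  rintro b (_ | ⟨_, hb⟩)
  · cases c <;> simp [wa, wb]
  · exact hblocks b hb

theorem AltBlocks.isUniversal {k : ℕ} {u : List Bool} (h : AltBlocks k u) : IsUniversal k u := by
  obtain ⟨blocks, rfl, hblocks, rfl⟩ := h
  refine isUniversal_flatten fun b hb x => ?_
  rcases hblocks b hb with rfl | rfl <;> cases x <;> simp [wa, wb]

theorem IsUniversal.exists_altBlocks_sublist {k : ℕ} {w : List Bool} (h : IsUniversal k w) :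
    ∃ u : List Bool, u <+ w ∧ u.length = 2 * k ∧ AltBlocks k u := by
  induction k generalizing w with
  | zero => exact ⟨[], List.nil_sublist w, rfl, altBlocks_zero⟩
  | succ k ih =>
    obtain ⟨c, w₀, rfl⟩ := List.exists_cons_of_ne_nil (List.ne_nil_of_mem (h.mem false))
    have hnc : (!c) ∈ w₀ := by simpa using h.mem (!c)
    obtain ⟨s, t, rfl, hs⟩ := List.eq_append_cons_of_mem hnc
    have ht : IsUniversal k t := by
      refine IsUniversal.of_append_cons (s := c :: s) h ?_
      simpa using hs
    obtain ⟨u, hu, hlen, hblocks⟩ := ih ht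
    refine ⟨c :: (!c) :: u, ?_, by simp [hlen]; ring, hblocks.cons c⟩
    exact ((hu.cons_cons (!c)).trans (List.sublist_append_right s _)).cons_cons c

theorem scatfact_full_iff_general (k : ℕ) (w : List Bool) :
    (∀ v : List Bool, v.length = k → v ∈ ScatFact k w) ↔
      ∃ u : List Bool, u.Sublist w ∧ u.length = 2 * k ∧ AltBlocks k u := by
  constructor
  · intro h
    exact IsUniversal.exists_altBlocks_sublist fun v hv => (mem_scatFact.mp (h v hv)).1
  · rintro ⟨u, hu, -, hblocks⟩ v hv
    exact mem_scatFact.mpr ⟨(hblocks.isUniversal v hv).trans hu, hv⟩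

theorem scatfact_full_iff (k : ℕ) (hk : 1 ≤ k) (w : List Bool) :
    (∀ v : List Bool, v.length = k → v ∈ ScatFact k w) ↔
      ∃ u : List Bool, u.Sublist w ∧ u.length = 2 * k ∧ AltBlocks k u :=
  scatfact_full_iff_general k w
end

section
/- For k ≥ 3, the k-spectrum of the word a^{k-1} b a b^{k-1} has exactly 2k elements; explicitly, it equals { a^r b^s : r+s = k } ∪ { a^i b a b^{k-2-i} : 0 ≤ i ≤ k-2 }. -/
/-!
A subsequence of `a^{k-1} b a b^{k-1}` splits as `a^p v b^q` with `p, q ≤ k - 1` and `v` a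
subsequence of the middle factor `b a`. According as `v` avoids or keeps the factor `b a`, a
subsequence of length `k` is either sorted, `a^r b^{k-r}` (`k + 1` words, told apart by their number
of `a`s), or `a^i b a b^{k-2-i}` (`k - 1` words); sorted words contain no `b` before an `a`, so the
two families are disjoint.
-/

open List

theorem mem_scatFact_iff {k : ℕ} {w u : List Bool} : u ∈ ScatFact k w ↔ u <+ w ∧ u.length = k := by
  simp [ScatFact, mem_sublists]

theorem sublist_pair_iff {α : Type*} {x y : α} {v : List α} :
    v <+ [x, y] ↔ v = [] ∨ v = [x] ∨ v = [y] ∨ v = [x, y] := by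
  rw [← mem_sublists]
  simp [sublists]

theorem sublist_replicate_append_append_replicate_iff {α : Type*} {x y : α} {m n : ℕ}
    {v u : List α} :
    u <+ replicate m x ++ v ++ replicate n y ↔
      ∃ p ≤ m, ∃ q ≤ n, ∃ v', v' <+ v ∧ u = replicate p x ++ v' ++ replicate q y := by
  constructor
  · intro h
    obtain ⟨u₁₂, u₃, rfl, h₁₂, h₃⟩ := sublist_append_iff.1 h
    obtain ⟨u₁, u₂, rfl, h₁, h₂⟩ := sublist_append_iff.1 h₁₂
    obtain ⟨p, hp, rfl⟩ := sublist_replicate_iff.1 h₁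
    obtain ⟨q, hq, rfl⟩ := sublist_replicate_iff.1 h₃
    exact ⟨p, hp, q, hq, u₂, h₂, rfl⟩
  · rintro ⟨p, hp, q, hq, v', hv', rfl⟩
    exact (((replicate_sublist_replicate x).2 hp).append hv').append
      ((replicate_sublist_replicate y).2 hq)

theorem not_pair_sublist_replicate_append_replicate (r s : ℕ) :
    ¬ [wb, wa] <+ replicate r wa ++ replicate s wb := by
  intro h
  have sorted : Pairwise (· ≤ ·) (replicate r wa ++ replicate s wb) := by
    simp [pairwise_append, pairwise_replicate, wa, wb]
  have : wb ≤ wa := by simpa using sorted.sublist h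
  exact absurd this (by decide)

theorem mem_scatFact_balanced_iff {k : ℕ} (hk : 2 ≤ k) (u : List Bool) :
    u ∈ ScatFact k (replicate (k - 1) wa ++ [wb, wa] ++ replicate (k - 1) wb) ↔
      (∃ r s : ℕ, r + s = k ∧ u = replicate r wa ++ replicate s wb) ∨
        ∃ i : ℕ, i ≤ k - 2 ∧ u = replicate i wa ++ [wb, wa] ++ replicate (k - 2 - i) wb := by
  rw [mem_scatFact_iff, sublist_replicate_append_append_replicate_iff]
  constructor
  · rintro ⟨⟨p, hp, q, hq, v, hv, rfl⟩, hlen⟩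
    rcases sublist_pair_iff.1 hv with rfl | rfl | rfl | rfl <;>
      simp only [length_append, length_replicate, length_cons, length_nil] at hlen
    · exact .inl ⟨p, q, by omega, by simp⟩
    · exact .inl ⟨p, q + 1, by omega, by simp [replicate_succ]⟩
    · exact .inl ⟨p + 1, q, by omega, by simp [replicate_succ']⟩
    · exact .inr ⟨p, by omega, by rw [show k - 2 - p = q by omega]⟩
  · rintro (⟨r, s, hrs, rfl⟩ | ⟨i, hi, rfl⟩)
    · refine ⟨?_, by simpa using hrs⟩
      rcases s with _ | s
      · refine ⟨k - 1, le_rfl, 0, by omega, [wa], by simp, ?_⟩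
        rw [← replicate_succ', show k - 1 + 1 = r by omega]
      · refine ⟨r, by omega, s, by omega, [wb], by simp, ?_⟩
        simp [replicate_succ]
    · exact ⟨⟨i, by omega, k - 2 - i, by omega, [wb, wa], Sublist.refl _, rfl⟩, by simp; omega⟩

theorem scatFact_balanced_eq {k : ℕ} (hk : 2 ≤ k) :
    ScatFact k (replicate (k - 1) wa ++ [wb, wa] ++ replicate (k - 1) wb) =
      (Finset.range (k + 1)).image (fun r => replicate r wa ++ replicate (k - r) wb) ∪
        (Finset.range (k - 1)).image
          (fun i => replicate i wa ++ [wb, wa] ++ replicate (k - 2 - i) wb) := by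
  ext u
  simp only [mem_scatFact_balanced_iff hk, Finset.mem_union, Finset.mem_image, Finset.mem_range]
  constructor
  · rintro (⟨r, s, hrs, rfl⟩ | ⟨i, hi, rfl⟩)
    · exact .inl ⟨r, by omega, by rw [show k - r = s by omega]⟩
    · exact .inr ⟨i, by omega, rfl⟩
  · rintro (⟨r, hr, rfl⟩ | ⟨i, hi, rfl⟩)
    · exact .inl ⟨r, k - r, by omega, rfl⟩
    · exact .inr ⟨i, by omega, rfl⟩

theorem card_scatFact_balanced {k : ℕ} (hk : 2 ≤ k) :
    (ScatFact k (replicate (k - 1) wa ++ [wb, wa] ++ replicate (k - 1) wb)).card = 2 * k := by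
  have disjoint :
      Disjoint ((Finset.range (k + 1)).image (fun r => replicate r wa ++ replicate (k - r) wb))
        ((Finset.range (k - 1)).image
          (fun i => replicate i wa ++ [wb, wa] ++ replicate (k - 2 - i) wb)) := by
    simp only [Finset.disjoint_left, Finset.mem_image, not_exists, not_and]
    rintro _ ⟨r, -, rfl⟩ i - h
    exact not_pair_sublist_replicate_append_replicate r (k - r) (h ▸ by simp)
  rw [scatFact_balanced_eq hk, Finset.card_union_of_disjoint disjoint, Finset.card_image_of_injOn,
    Finset.card_image_of_injOn, Finset.card_range, Finset.card_range]
  · omega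
  all_goals
    intro i _ j _ h
    simpa [wa, wb, count_replicate] using congrArg (count wa) h

theorem scatfact_ak1_b_a_bk1 (k : ℕ) (hk : 3 ≤ k) :
    (∀ u : List Bool,
      u ∈ ScatFact k (List.replicate (k - 1) wa ++ [wb, wa] ++ List.replicate (k - 1) wb) ↔
        ((∃ r s : ℕ, r + s = k ∧ u = List.replicate r wa ++ List.replicate s wb) ∨
         (∃ i : ℕ, i ≤ k - 2 ∧
            u = List.replicate i wa ++ [wb, wa] ++ List.replicate (k - 2 - i) wb))) ∧
    (ScatFact k (List.replicate (k - 1) wa ++ [wb, wa] ++ List.replicate (k - 1) wb)).card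
      = 2 * k := by
  have hk2 : 2 ≤ k := by omega
  exact ⟨mem_scatFact_balanced_iff hk2, card_scatFact_balanced hk2⟩
end

section
/- Let w be a prefix of the infinite word (ab)^ω of length n. Then for every ℓ ≤ n, the number of distinct subsequences of w of length ℓ equals the sum over j from 0 to n−ℓ of the binomial coefficient C(ℓ, n−ℓ−j). In particular if ℓ ≤ n−ℓ then w has exactly 2^ℓ distinct subsequences of length ℓ. -/
/-- The prefix of length `n` of the infinite word `(ab)^ω`. -/
def altPrefix (n : ℕ) : List Bool :=
  (List.range n).map (fun i => if i % 2 = 0 then wa else wb)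

/-
Embed `u` greedily into the alternating word starting with `c`: a letter equal to the next
available letter costs one position, any other letter has to skip one and costs two. So `u` is
a subsequence of the alternating word of length `n` iff `|u| + d(u) ≤ n`, where the defect
`d(u)` counts the letters equal to their predecessor (for the first letter: different from
`c`). Building `u` letter by letter, each letter either keeps or raises the defect, whence
`∑_{|u| = ℓ} X^d(u) = (1 + X)^ℓ`: exactly `C(ℓ, k)` words of length `ℓ` have defect `k`, and
summing over `k ≤ n - ℓ` gives the count.
-/

open Polynomial

def alt : Bool → ℕ → List Bool
  | _, 0 => []
  | c, n + 1 => c :: alt (!c) n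

def altDefect : Bool → List Bool → ℕ
  | _, [] => 0
  | c, d :: l => (if d = c then 0 else 1) + altDefect (!d) l

def words : ℕ → Finset (List Bool)
  | 0 => {[]}
  | n + 1 => (words n).image (List.cons false) ∪ (words n).image (List.cons true)

lemma alt_eq_map_range (c : Bool) (n : ℕ) :
    alt c n = (List.range n).map fun i => if i % 2 = 0 then c else !c := by
  induction n generalizing c with
  | zero => rfl
  | succ n ih =>
    simp only [alt, ih, List.range_succ_eq_map, List.map_cons, List.map_map]
    congr 2
    ext i
    rcases Nat.mod_two_eq_zero_or_one i with h | h <;>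
      simp [Function.comp, Nat.succ_mod_two_eq_zero_iff, h]

lemma altPrefix_eq_alt (n : ℕ) : altPrefix n = alt false n := by
  rw [alt_eq_map_range]
  rfl

lemma altDefect_le_altDefect_not_add_one (c : Bool) (u : List Bool) :
    altDefect c u ≤ altDefect (!c) u + 1 := by
  cases u with
  | nil => simp [altDefect]
  | cons d l => cases c <;> cases d <;> simp [altDefect] <;> omega

lemma sublist_alt_of_length_add_altDefect_le (u : List Bool) (c : Bool) (n : ℕ)
    (h : u.length + altDefect c u ≤ n) : u.Sublist (alt c n) := by
  induction u generalizing c n with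
  | nil => exact List.nil_sublist _
  | cons d l ih =>
    by_cases hdc : d = c
    · subst hdc
      simp only [altDefect, if_true, zero_add, List.length_cons] at h
      obtain ⟨m, rfl⟩ : ∃ m, n = m + 1 := ⟨n - 1, by omega⟩
      exact (ih (!d) m (by omega)).cons_cons d
    · obtain rfl : c = !d := by cases c <;> cases d <;> simp_all
      simp only [altDefect, Bool.eq_not_self, if_false, List.length_cons] at h
      obtain ⟨m, rfl⟩ : ∃ m, n = m + 2 := ⟨n - 2, by omega⟩
      simp only [alt, Bool.not_not]
      exact ((ih (!d) m (by omega)).cons_cons d).cons (!d)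

lemma length_add_altDefect_le_of_sublist_alt (n : ℕ) (c : Bool) (u : List Bool)
    (h : u.Sublist (alt c n)) : u.length + altDefect c u ≤ n := by
  induction n generalizing c u with
  | zero => simp_all [alt, altDefect]
  | succ n ih =>
    rcases List.sublist_cons_iff.1 h with hu | ⟨l, rfl, hl⟩
    · have := ih (!c) u hu
      have := altDefect_le_altDefect_not_add_one c u
      omega
    · have := ih (!c) l hl
      simp only [altDefect, if_true, zero_add, List.length_cons]
      omega

lemma sublist_alt_iff (u : List Bool) (c : Bool) (n : ℕ) :
    u.Sublist (alt c n) ↔ u.length + altDefect c u ≤ n :=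
  ⟨length_add_altDefect_le_of_sublist_alt n c u, sublist_alt_of_length_add_altDefect_le u c n⟩

lemma mem_words {n : ℕ} {u : List Bool} : u ∈ words n ↔ u.length = n := by
  induction n generalizing u with
  | zero => cases u <;> simp [words]
  | succ n ih => cases u with
    | nil => simp [words]
    | cons d l => cases d <;> simp [words, ih]

lemma sum_words_succ {M : Type*} [AddCommMonoid M] (n : ℕ) (f : List Bool → M) :
    ∑ u ∈ words (n + 1), f u = ∑ l ∈ words n, (f (false :: l) + f (true :: l)) := by
  have hdisj : Disjoint ((words n).image (List.cons false)) ((words n).image (List.cons true)) := by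
    simp [Finset.disjoint_left]
  rw [words, Finset.sum_union hdisj, Finset.sum_image (List.cons_injective.injOn),
    Finset.sum_image (List.cons_injective.injOn), Finset.sum_add_distrib]

lemma sum_words_X_pow_altDefect (c : Bool) (ℓ : ℕ) :
    ∑ u ∈ words ℓ, (X : ℕ[X]) ^ altDefect c u = (1 + X) ^ ℓ := by
  induction ℓ generalizing c with
  | zero => simp [words, altDefect]
  | succ ℓ ih =>
    rw [sum_words_succ]
    cases c <;>
      simp only [altDefect, ↓reduceIte, Bool.not_false, Bool.not_true, Bool.true_eq_false,
        Bool.false_eq_true, zero_add, pow_add, pow_one, Finset.sum_add_distrib, ← Finset.mul_sum,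
        ih] <;>
      ring

lemma card_filter_altDefect_eq (c : Bool) (ℓ k : ℕ) :
    ((words ℓ).filter fun u => altDefect c u = k).card = ℓ.choose k := by
  have := congrArg (coeff · k) (sum_words_X_pow_altDefect c ℓ)
  simp only [finsetSum_coeff, coeff_X_pow, coeff_one_add_X_pow, Finset.sum_boole] at this
  simp_rw [eq_comm (a := k)] at this
  exact_mod_cast this

lemma scatFact_alt_eq_filter (c : Bool) (ℓ n : ℕ) :
    ScatFact ℓ (alt c n) = (words ℓ).filter fun u => ℓ + altDefect c u ≤ n := by
  ext u
  simp only [ScatFact, List.mem_toFinset, List.mem_filter, List.mem_sublists, sublist_alt_iff,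
    decide_eq_true_eq, Finset.mem_filter, mem_words]
  constructor <;> rintro ⟨h₁, h₂⟩ <;> exact ⟨by omega, by omega⟩

lemma card_scatFact_alt (c : Bool) {ℓ n : ℕ} (h : ℓ ≤ n) :
    (ScatFact ℓ (alt c n)).card = ∑ k ∈ Finset.range (n - ℓ + 1), ℓ.choose k := by
  rw [scatFact_alt_eq_filter, Finset.card_eq_sum_card_fiberwise (f := altDefect c)]
  · refine Finset.sum_congr rfl fun k hk => ?_
    rw [Finset.filter_filter, ← card_filter_altDefect_eq c ℓ k]
    congr 1
    refine Finset.filter_congr fun u _ => ?_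
    simp only [Finset.mem_range] at hk
    constructor <;> rintro ⟨-, rfl⟩ <;> omega
  · intro u hu
    simp only [Finset.coe_filter, Set.mem_ofPred_eq] at hu
    simp only [Finset.coe_range, Set.mem_Iio]
    omega

theorem scatfact_alt_prefix (n : ℕ) :
    (∀ ℓ : ℕ, ℓ ≤ n →
      (ScatFact ℓ (altPrefix n)).card
        = ∑ j ∈ Finset.range (n - ℓ + 1), Nat.choose ℓ (n - ℓ - j)) ∧
    (∀ ℓ : ℕ, ℓ ≤ n - ℓ → (ScatFact ℓ (altPrefix n)).card = 2 ^ ℓ) := by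
  refine ⟨fun ℓ hℓ => ?_, fun ℓ hℓ => ?_⟩
  · rw [altPrefix_eq_alt, card_scatFact_alt false hℓ,
      ← Finset.sum_range_reflect (fun j => ℓ.choose j)]
    simp
  · rw [altPrefix_eq_alt, card_scatFact_alt false (by omega), ← Nat.sum_range_choose ℓ]
    refine (Finset.sum_subset (Finset.range_subset_range.2 (by omega)) fun k _ hk => ?_).symm
    exact Nat.choose_eq_zero_of_lt (by simpa using hk)
end
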